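/- arXiv:1811.06351 — 2 statements merged into one kernel-verified Lean document; each statement's English description precedes it below -/
import Mathlib

section
/- Let f : ℝ → ℝ be differentiable, and let q > 0, η > 1, p ∈ [0,q) with q ≤ η. Then ‖x ↦ ∫_ℝ [f(x+z) − f(x)] (max(|z|,1))^{−1−q} dz‖_{∞,p} ≤ (1 + 1/(q−p)) K_η ‖f'‖_{∞,η}, where K_η = 2^{η+4} η/(η−1). -/
/-!
Write `⟨y⟩ = max |y| 1` and `M = ‖f'‖_{∞,η}`, so `|f'(y)| ≤ M ⟨y⟩^{-η}`. The increment
`f(x+z) - f(x)` is bounded globally by `M ∫ ⟨y⟩^{-η} = M · 2η/(η-1)`, and for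
`|z| ≤ max (|x|/2) 1`, where the segment from `x` to `x+z` stays in `⟨y⟩ ≥ ⟨x⟩/2`, by the mean
value bound `M 2^η ⟨x⟩^{-η} |z|`. Since `0 ≤ p ≤ η`, together they give
`|f(x+z) - f(x)| ≤ C (⟨z⟩/⟨x⟩)^p` with `C = M 2^η (1 + 2η/(η-1))`, so the integrand is at most `C ⟨x⟩^{-p} ⟨z⟩^{-(1+q-p)}`,
which is integrable because `p < q`, with `∫ ⟨z⟩^{-s} = 2s/(s-1)`.
-/

open MeasureTheory

/-- Weighted supremum norm `‖f‖_{∞,p} = sup_x |f(x)| (|x| ∨ 1)^p`, with values in `[0,∞]`. -/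
noncomputable def wnorm (f : ℝ → ℝ) (p : ℝ) : ENNReal :=
  ⨆ x : ℝ, ENNReal.ofReal (|f x| * (max |x| 1) ^ p)

open Set Real Filter Interval

lemma integrable_max_abs_one_rpow_neg {s : ℝ} (hs : 1 < s) :
    Integrable fun y : ℝ => (max |y| 1) ^ (-s) := by
  have hdom : Integrable fun y : ℝ => 2 ^ s * (1 + ‖y‖) ^ (-s) :=
    (integrable_one_add_norm (by simpa using hs)).const_mul _
  refine hdom.mono' (Measurable.aestronglyMeasurable (by fun_prop))
    (Eventually.of_forall fun y => ?_)
  have hy : (1 + |y|) / 2 ≤ max |y| 1 := by linarith [le_max_left |y| 1, le_max_right |y| 1]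
  rw [norm_of_nonneg (by positivity), norm_eq_abs]
  calc (max |y| 1) ^ (-s) ≤ ((1 + |y|) / 2) ^ (-s) :=
        rpow_le_rpow_of_nonpos (by positivity) hy (by linarith)
    _ = 2 ^ s * (1 + |y|) ^ (-s) := by
        rw [div_rpow (by positivity) zero_le_two, rpow_neg zero_le_two, div_inv_eq_mul, mul_comm]

lemma integral_max_abs_one_rpow_neg {s : ℝ} (hs : 1 < s) :
    ∫ y : ℝ, (max |y| 1) ^ (-s) = 2 * s / (s - 1) := by
  have hIoc : EqOn (fun t : ℝ => (max t 1) ^ (-s)) 1 (Ioc 0 1) := fun t ht => by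
    simp [max_eq_right ht.2]
  have hIoi : EqOn (fun t : ℝ => (max t 1) ^ (-s)) (fun t => t ^ (-s)) (Ioi 1) := fun t ht => by
    simp [max_eq_left (mem_Ioi.mp ht).le]
  have hint_Ioc : IntegrableOn (fun t : ℝ => (max t 1) ^ (-s)) (Ioc 0 1) :=
    (integrableOn_const (by simp)).congr_fun hIoc.symm measurableSet_Ioc
  have hint_Ioi : IntegrableOn (fun t : ℝ => (max t 1) ^ (-s)) (Ioi 1) :=
    (integrableOn_Ioi_rpow_of_lt (by linarith) one_pos).congr_fun hIoi.symm measurableSet_Ioi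
  rw [integral_comp_abs (f := fun t => (max t 1) ^ (-s)), ← Ioc_union_Ioi_eq_Ioi zero_le_one,
    setIntegral_union (Ioc_disjoint_Ioi le_rfl) measurableSet_Ioi hint_Ioc hint_Ioi,
    setIntegral_congr_fun measurableSet_Ioc hIoc, setIntegral_congr_fun measurableSet_Ioi hIoi,
    integral_Ioi_rpow_of_lt (by linarith) one_pos, Pi.one_def, setIntegral_const,
    volume_real_Ioc, one_rpow, show -s + 1 = -(s - 1) by ring]
  have : s - 1 ≠ 0 := by linarith
  field_simp
  norm_num

lemma abs_le_toReal_wnorm_mul {g : ℝ → ℝ} {p : ℝ} (hg : wnorm g p < ⊤) (x : ℝ) :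
    |g x| ≤ (wnorm g p).toReal * (max |x| 1) ^ (-p) := by
  have h : |g x| * (max |x| 1) ^ p ≤ (wnorm g p).toReal :=
    (ENNReal.ofReal_le_iff_le_toReal hg.ne).mp
      (le_iSup (fun y => ENNReal.ofReal (|g y| * (max |y| 1) ^ p)) x)
  rwa [rpow_neg (by positivity), ← div_eq_mul_inv, le_div_iff₀ (by positivity)]

lemma wnorm_le_ofReal {g : ℝ → ℝ} {p C : ℝ} (h : ∀ x, |g x| * (max |x| 1) ^ p ≤ C) :
    wnorm g p ≤ ENNReal.ofReal C :=
  iSup_le fun x => ENNReal.ofReal_le_ofReal (h x)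

lemma abs_sub_le_integral_of_abs_deriv_le {f w : ℝ → ℝ} (hf : Differentiable ℝ f)
    (hw : Integrable w) (hfw : ∀ y, |deriv f y| ≤ w y) (a b : ℝ) :
    |f b - f a| ≤ ∫ y, w y := by
  have hint : Integrable (deriv f) :=
    hw.mono' (measurable_deriv f).aestronglyMeasurable (Eventually.of_forall hfw)
  rw [← intervalIntegral.integral_eq_sub_of_hasDerivAt (fun y _ => (hf y).hasDerivAt)
    hint.intervalIntegrable, ← norm_eq_abs, intervalIntegral.norm_integral_eq_norm_integral_uIoc]
  calc ‖∫ y in Ι a b, deriv f y‖ ≤ ∫ y in Ι a b, w y :=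
        norm_integral_le_of_norm_le hw.integrableOn (Eventually.of_forall hfw)
    _ ≤ ∫ y, w y :=
        setIntegral_le_integral hw (Eventually.of_forall fun y => (abs_nonneg _).trans (hfw y))

lemma max_abs_one_div_two_le {x y : ℝ} (h : |y - x| ≤ max (|x| / 2) 1) :
    max |x| 1 / 2 ≤ max |y| 1 := by
  have hxy := abs_sub_abs_le_abs_sub x y
  rw [abs_sub_comm] at h
  rcases le_total (|x| / 2) 1 with hx | hx
  · rw [max_eq_right hx] at h
    exact le_max_of_le_right (by rw [div_le_one two_pos]; exact max_le (by linarith) one_le_two)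
  · rw [max_eq_left hx] at h
    rw [max_eq_left (by linarith)]
    exact le_max_of_le_left (by linarith)

lemma rpow_neg_mul_le_rpow_mul_rpow_neg {Z X η p : ℝ} (hZ : 1 ≤ Z) (hZX : Z ≤ X) (hη : 1 ≤ η)
    (hpη : p ≤ η) : X ^ (-η) * Z ≤ Z ^ p * X ^ (-p) := by
  have hZ0 : 0 < Z := one_pos.trans_le hZ
  have hX0 : 0 < X := hZ0.trans_le hZX
  calc X ^ (-η) * Z = X ^ (-η) * (Z ^ p * Z ^ (1 - p)) := by
        rw [← rpow_add hZ0, add_sub_cancel, rpow_one]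
    _ ≤ X ^ (-η) * (Z ^ p * X ^ (η - p)) := by
        gcongr
        exact (rpow_le_rpow_of_exponent_le hZ (by linarith)).trans
          (rpow_le_rpow hZ0.le hZX (by linarith))
    _ = Z ^ p * X ^ (-p) := by
        rw [mul_left_comm, ← rpow_add hX0]
        ring_nf

lemma one_le_two_rpow_mul_rpow_mul_rpow_neg {Z X η p : ℝ} (hX : 0 < X) (hXZ : X ≤ 2 * Z)
    (hp : 0 ≤ p) (hpη : p ≤ η) : 1 ≤ 2 ^ η * (Z ^ p * X ^ (-p)) := by
  have hZ0 : 0 ≤ Z := by linarith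
  calc 1 ≤ (2 * Z / X) ^ p := one_le_rpow (by rwa [le_div_iff₀ hX, one_mul]) hp
    _ = 2 ^ p * (Z ^ p * X ^ (-p)) := by
        rw [div_rpow (by positivity) hX.le, mul_rpow zero_le_two hZ0, rpow_neg hX.le]
        ring
    _ ≤ 2 ^ η * (Z ^ p * X ^ (-p)) :=
        mul_le_mul_of_nonneg_right (rpow_le_rpow_of_exponent_le one_le_two hpη) (by positivity)

section DerivativeDecay

variable {f : ℝ → ℝ} {M η : ℝ}

lemma abs_add_sub_le_of_abs_deriv_le_rpow (hf : Differentiable ℝ f) (hη : 0 ≤ η)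
    (hM : ∀ y, |deriv f y| ≤ M * (max |y| 1) ^ (-η)) {x z : ℝ} (hz : |z| ≤ max (|x| / 2) 1) :
    |f (x + z) - f x| ≤ M * 2 ^ η * (max |x| 1) ^ (-η) * |z| := by
  have hM0 : 0 ≤ M := nonneg_of_mul_nonneg_left ((abs_nonneg _).trans (hM 0)) (by positivity)
  have hball : ∀ y ∈ Metric.closedBall x (max (|x| / 2) 1),
      ‖deriv f y‖ ≤ M * 2 ^ η * (max |x| 1) ^ (-η) := fun y hy => by
    have hxy : max |x| 1 / 2 ≤ max |y| 1 := max_abs_one_div_two_le (by simpa [dist_eq] using hy)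
    calc ‖deriv f y‖ ≤ M * (max |y| 1) ^ (-η) := hM y
      _ ≤ M * (max |x| 1 / 2) ^ (-η) :=
        mul_le_mul_of_nonneg_left (rpow_le_rpow_of_nonpos (by positivity) hxy (by linarith)) hM0
      _ = M * 2 ^ η * (max |x| 1) ^ (-η) := by
        rw [div_rpow (by positivity) zero_le_two, rpow_neg zero_le_two, div_inv_eq_mul]; ring
  have hx : x ∈ Metric.closedBall x (max (|x| / 2) 1) :=
    Metric.mem_closedBall_self (zero_le_one.trans (le_max_right _ _))
  have hxz : x + z ∈ Metric.closedBall x (max (|x| / 2) 1) := by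
    rwa [Metric.mem_closedBall, dist_eq, add_sub_cancel_left]
  have h := Convex.norm_image_sub_le_of_norm_deriv_le (fun y _ => hf y) hball
    (convex_closedBall _ _) hx hxz
  rwa [norm_eq_abs, norm_eq_abs, add_sub_cancel_left] at h

lemma abs_sub_le_of_abs_deriv_le_rpow (hf : Differentiable ℝ f) (hη : 1 < η)
    (hM : ∀ y, |deriv f y| ≤ M * (max |y| 1) ^ (-η)) (a b : ℝ) :
    |f b - f a| ≤ M * (2 * η / (η - 1)) := by
  rw [← integral_max_abs_one_rpow_neg hη, ← integral_const_mul]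
  exact abs_sub_le_integral_of_abs_deriv_le hf
    ((integrable_max_abs_one_rpow_neg hη).const_mul M) hM a b

lemma abs_add_sub_le_mul_rpow_mul_rpow_neg (hf : Differentiable ℝ f) (hη : 1 < η) {p : ℝ}
    (hp : 0 ≤ p) (hpη : p ≤ η) (hM : ∀ y, |deriv f y| ≤ M * (max |y| 1) ^ (-η)) (x z : ℝ) :
    |f (x + z) - f x|
      ≤ M * 2 ^ η * (1 + 2 * η / (η - 1)) * ((max |z| 1) ^ p * (max |x| 1) ^ (-p)) := by
  have hM0 : 0 ≤ M := nonneg_of_mul_nonneg_left ((abs_nonneg _).trans (hM 0)) (by positivity)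
  have hT : 0 ≤ 2 * η / (η - 1) := div_nonneg (by linarith) (by linarith)
  have hw : 0 ≤ (max |z| 1) ^ p * (max |x| 1) ^ (-p) := by positivity
  rcases le_or_gt |z| (max (|x| / 2) 1) with hz | hz
  · have hZX : max |z| 1 ≤ max |x| 1 :=
      max_le (hz.trans (max_le_max (by linarith [abs_nonneg x]) le_rfl)) (le_max_right _ _)
    calc |f (x + z) - f x| ≤ M * 2 ^ η * ((max |x| 1) ^ (-η) * |z|) := by
          rw [← mul_assoc]; exact abs_add_sub_le_of_abs_deriv_le_rpow hf (by linarith) hM hz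
      _ ≤ M * 2 ^ η * ((max |x| 1) ^ (-η) * max |z| 1) := by gcongr; exact le_max_left _ _
      _ ≤ M * 2 ^ η * ((max |z| 1) ^ p * (max |x| 1) ^ (-p)) :=
          mul_le_mul_of_nonneg_left
            (rpow_neg_mul_le_rpow_mul_rpow_neg (le_max_right _ _) hZX hη.le hpη) (by positivity)
      _ ≤ M * 2 ^ η * (1 + 2 * η / (η - 1)) * ((max |z| 1) ^ p * (max |x| 1) ^ (-p)) :=
          mul_le_mul_of_nonneg_right
            (le_mul_of_one_le_right (by positivity) (by linarith)) hw
  · have hXZ : max |x| 1 ≤ 2 * max |z| 1 :=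
      max_le (by linarith [le_max_left |z| 1, le_max_left (|x| / 2) 1])
        (by linarith [le_max_right |z| 1])
    calc |f (x + z) - f x| ≤ M * (2 * η / (η - 1)) := abs_sub_le_of_abs_deriv_le_rpow hf hη hM _ _
      _ ≤ M * (2 * η / (η - 1)) * (2 ^ η * ((max |z| 1) ^ p * (max |x| 1) ^ (-p))) :=
          le_mul_of_one_le_right (by positivity)
            (one_le_two_rpow_mul_rpow_mul_rpow_neg (by positivity) hXZ hp hpη)
      _ ≤ M * 2 ^ η * (1 + 2 * η / (η - 1)) * ((max |z| 1) ^ p * (max |x| 1) ^ (-p)) := by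
          nlinarith [mul_nonneg (mul_nonneg hM0 (rpow_nonneg zero_le_two η)) hw]

lemma abs_integral_add_sub_mul_rpow_le {p q : ℝ} (hf : Differentiable ℝ f)
    (hη : 1 < η) (hp : 0 ≤ p) (hpq : p < q) (hqη : q ≤ η)
    (hM : ∀ y, |deriv f y| ≤ M * (max |y| 1) ^ (-η)) (x : ℝ) :
    |∫ z, (f (x + z) - f x) * (max |z| 1) ^ (-(1 + q))| * (max |x| 1) ^ p
      ≤ M * 2 ^ η * (1 + 2 * η / (η - 1)) * (2 * (1 + (q - p)) / (q - p)) := by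
  set C := M * 2 ^ η * (1 + 2 * η / (η - 1))
  have hs : 1 < 1 + (q - p) := by linarith
  have hbound : ∀ z, ‖(f (x + z) - f x) * (max |z| 1) ^ (-(1 + q))‖
      ≤ C * (max |x| 1) ^ (-p) * (max |z| 1) ^ (-(1 + (q - p))) := fun z => by
    rw [norm_mul, norm_eq_abs, norm_of_nonneg (by positivity)]
    calc |f (x + z) - f x| * (max |z| 1) ^ (-(1 + q))
        ≤ C * ((max |z| 1) ^ p * (max |x| 1) ^ (-p)) * (max |z| 1) ^ (-(1 + q)) :=
          mul_le_mul_of_nonneg_right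
            (abs_add_sub_le_mul_rpow_mul_rpow_neg hf hη hp (hpq.le.trans hqη) hM x z)
            (by positivity)
      _ = C * (max |x| 1) ^ (-p) * (max |z| 1) ^ (-(1 + (q - p))) := by
          rw [show -(1 + (q - p)) = p + -(1 + q) by ring, rpow_add (by positivity)]
          ring
  have hint : |∫ z, (f (x + z) - f x) * (max |z| 1) ^ (-(1 + q))|
      ≤ C * (max |x| 1) ^ (-p) * (2 * (1 + (q - p)) / (q - p)) := by
    have hI : ∫ z : ℝ, (max |z| 1) ^ (-(1 + (q - p))) = 2 * (1 + (q - p)) / (q - p) := by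
      rw [integral_max_abs_one_rpow_neg hs, add_sub_cancel_left]
    rw [← norm_eq_abs, ← hI, ← integral_const_mul]
    exact norm_integral_le_of_norm_le ((integrable_max_abs_one_rpow_neg hs).const_mul _)
      (Eventually.of_forall hbound)
  have hX : (max |x| 1) ^ (-p) * (max |x| 1) ^ p = 1 := by
    rw [← rpow_add (by positivity), neg_add_cancel, rpow_zero]
  calc |∫ z, (f (x + z) - f x) * (max |z| 1) ^ (-(1 + q))| * (max |x| 1) ^ p
      ≤ C * (max |x| 1) ^ (-p) * (2 * (1 + (q - p)) / (q - p)) * (max |x| 1) ^ p :=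
        mul_le_mul_of_nonneg_right hint (by positivity)
    _ = C * (2 * (1 + (q - p)) / (q - p)) := by
        rw [mul_right_comm, mul_assoc C, hX, mul_one]

end DerivativeDecay

lemma two_rpow_mul_one_add_div_le {η a : ℝ} (hη : 1 < η) (ha : 0 < a) :
    2 ^ η * (1 + 2 * η / (η - 1)) * (2 * (1 + a) / a)
      ≤ (1 + 1 / a) * (2 ^ (η + 4) * η / (η - 1)) := by
  have hb : 0 < η - 1 := by linarith
  rw [rpow_add two_pos, show (2 : ℝ) ^ (4 : ℝ) = 16 by norm_num]
  have h2 : 0 < (2 : ℝ) ^ η := by positivity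
  field_simp
  nlinarith [mul_pos h2 ha, mul_pos (mul_pos h2 ha) hb]

theorem stmt4_general (f : ℝ → ℝ) (hf : Differentiable ℝ f) (p q η : ℝ)
    (hη : 1 < η) (hp0 : 0 ≤ p) (hpq : p < q) (hqη : q ≤ η)
    (hfin : wnorm (deriv f) η < ⊤) :
    wnorm (fun x => ∫ z : ℝ, (f (x + z) - f x) * (max |z| 1) ^ (-(1 + q))) p
      ≤ ENNReal.ofReal ((1 + 1 / (q - p)) * (2 ^ (η + 4) * η / (η - 1)))
          * wnorm (deriv f) η := by
  set M := (wnorm (deriv f) η).toReal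
  have hqp : 0 < q - p := by linarith
  have hM0 : 0 ≤ M := ENNReal.toReal_nonneg
  have hC : 0 ≤ (1 + 1 / (q - p)) * (2 ^ (η + 4) * η / (η - 1)) :=
    mul_nonneg (by positivity) (div_nonneg (by positivity) (by linarith))
  rw [← ENNReal.ofReal_toReal hfin.ne, ← ENNReal.ofReal_mul hC]
  refine wnorm_le_ofReal fun x => ?_
  calc _ ≤ M * 2 ^ η * (1 + 2 * η / (η - 1)) * (2 * (1 + (q - p)) / (q - p)) :=
        abs_integral_add_sub_mul_rpow_le hf hη hp0 hpq hqη (abs_le_toReal_wnorm_mul hfin) x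
    _ = M * (2 ^ η * (1 + 2 * η / (η - 1)) * (2 * (1 + (q - p)) / (q - p))) := by ring
    _ ≤ M * ((1 + 1 / (q - p)) * (2 ^ (η + 4) * η / (η - 1))) :=
        mul_le_mul_of_nonneg_left (two_rpow_mul_one_add_div_le hη hqp) hM0
    _ = _ := mul_comm _ _

theorem stmt4 (f : ℝ → ℝ) (hf : Differentiable ℝ f) (p q η : ℝ)
    (hq : 0 < q) (hη : 1 < η) (hp0 : 0 ≤ p) (hpq : p < q) (hqη : q ≤ η)
    (hfin : wnorm (deriv f) η < ⊤) :
    wnorm (fun x => ∫ z : ℝ, (f (x + z) - f x) * (max |z| 1) ^ (-(1 + q))) p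
      ≤ ENNReal.ofReal ((1 + 1 / (q - p)) * (2 ^ (η + 4) * η / (η - 1)))
          * wnorm (deriv f) η :=
  stmt4_general f hf p q η hη hp0 hpq hqη hfin
end

section
/- Let f : ℝ → ℝ be twice continuously differentiable with f and f'' bounded. Then the map α ↦ f^{[α]}(0) = ∫_ℝ [f(z) − f(0) − f'(0) z 𝟙_{|z|≤1}] |z|^{−1−α} dz is continuously differentiable on (0,2), with derivative d/dα f^{[α]}(0) = −∫_ℝ [f(z) − f(0) − f'(0) z 𝟙_{|z|≤1}] |z|^{−1−α} ln|z| dz. -/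
/-!
Write `g z` for the compensated increment `f z - f 0 - f'(0) z 𝟙_{|z| ≤ 1}`. The second-order
Taylor bound near `0` and boundedness of `f` away from it give `|g z| ≤ C min(z², 1)`. For `α`
in `[α₀ - ε, α₀ + ε] ⊆ (0, 2)`, the logarithm is absorbed into `|z|^{∓ε}`, so both
`g z / |z|^{1+α}` and its `α`-derivative `-g z log|z| / |z|^{1+α}` are dominated by
`C' |z|^{1-α₀-2ε}` near `0` and `C' |z|^{-1-α₀+2ε}` near `∞`, which is integrable.
Differentiation under the integral sign and dominated convergence then give the derivative
formula and its continuity.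
-/

open MeasureTheory Real Set Filter Topology

lemma integrable_piecewise_abs_rpow {p q : ℝ} (hp : p < -1) (hq : -1 < q) :
    Integrable (fun z : ℝ => if |z| ≤ 1 then |z| ^ q else |z| ^ p) := by
  have hle : IntegrableOn (fun y : ℝ => y ^ q) (Ioc 0 1) :=
    (integrableOn_Ioc_iff_integrableOn_Ioo).2
      ((intervalIntegral.integrableOn_Ioo_rpow_iff one_pos).2 hq)
  have hgt : IntegrableOn (fun y : ℝ => y ^ p) (Ioi 1) := (integrableOn_Ioi_rpow_iff one_pos).2 hp
  have h := (integrable_fun_norm_addHaar volume (E := ℝ)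
    (f := fun y => if y ≤ 1 then y ^ q else y ^ p)).2 ?_
  · simpa only [Real.norm_eq_abs] using h
  rw [← Ioc_union_Ioi_eq_Ioi zero_le_one]
  refine (hle.congr_fun ?_ measurableSet_Ioc).union (hgt.congr_fun ?_ measurableSet_Ioi)
  · intro y hy; simp [hy.2]
  · intro y hy; simp [not_le.2 (mem_Ioi.1 hy)]

lemma one_add_abs_log_le_rpow {x δ : ℝ} (hx : 1 ≤ x) (hδ : 0 < δ) :
    1 + |log x| ≤ (1 + 1 / δ) * x ^ δ := by
  have hlog : log x ≤ x ^ δ / δ := log_le_rpow_div (by linarith) hδ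
  have hone : 1 ≤ x ^ δ := one_le_rpow hx hδ.le
  rw [abs_of_nonneg (log_nonneg hx)]
  calc 1 + log x ≤ x ^ δ + x ^ δ / δ := add_le_add hone hlog
    _ = (1 + 1 / δ) * x ^ δ := by ring

lemma one_add_abs_log_le_rpow_neg {x δ : ℝ} (hx0 : 0 < x) (hx1 : x ≤ 1) (hδ : 0 < δ) :
    1 + |log x| ≤ (1 + 1 / δ) * x ^ (-δ) := by
  have := one_add_abs_log_le_rpow ((one_le_inv₀ hx0).2 hx1) hδ
  rwa [log_inv, abs_neg, inv_rpow hx0.le, ← rpow_neg hx0.le] at this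

lemma abs_sub_sub_deriv_mul_le {f : ℝ → ℝ} {M : ℝ} (hf : Differentiable ℝ f)
    (hf' : Differentiable ℝ (deriv f)) (hM : ∀ x, |deriv (deriv f) x| ≤ M) (a z : ℝ) :
    |f z - f a - deriv f a * (z - a)| ≤ M * (z - a) ^ 2 := by
  have hlip : ∀ t, |deriv f t - deriv f a| ≤ M * |t - a| := fun t => by
    simpa using convex_univ.norm_image_sub_le_of_norm_deriv_le (fun x _ => hf' x)
      (fun x _ => hM x) (mem_univ a) (mem_univ t)
  have hderiv : ∀ t ∈ uIcc a z, HasDerivWithinAt (fun t => f t - deriv f a * t)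
      (deriv f t - deriv f a) (uIcc a z) t := fun t _ => by
    simpa using ((hf t).hasDerivAt.fun_sub
      ((hasDerivAt_id' t).const_mul (deriv f a))).hasDerivWithinAt
  have hbound : ∀ t ∈ uIcc a z, ‖deriv f t - deriv f a‖ ≤ M * |z - a| := fun t ht =>
    (hlip t).trans (mul_le_mul_of_nonneg_left (abs_sub_left_of_mem_uIcc ht)
      ((abs_nonneg _).trans (hM a)))
  have := (convex_uIcc a z).norm_image_sub_le_of_norm_hasDerivWithin_le hderiv hbound
    left_mem_uIcc right_mem_uIcc
  rw [Real.norm_eq_abs, Real.norm_eq_abs, mul_assoc, abs_mul_abs_self, ← sq] at this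
  convert this using 2
  ring

lemma hasDerivAt_div_rpow_one_add {x : ℝ} (hx : 0 < x) (c α : ℝ) :
    HasDerivAt (fun α => c / x ^ (1 + α)) (-(c * log x / x ^ (1 + α))) α := by
  have hpos := rpow_pos_of_pos hx (1 + α)
  have h := ((hasDerivAt_id' α).const_add 1).const_rpow hx
  refine ((hasDerivAt_const α c).fun_div h hpos.ne').congr_deriv ?_
  field_simp
  ring

lemma mul_one_add_abs_log_div_rpow_le_of_le_one {c C x α b δ : ℝ} (hx0 : 0 < x) (hx1 : x ≤ 1)
    (hc0 : 0 ≤ c) (hc : c ≤ C * x ^ 2) (hαb : α ≤ b) (hδ : 0 < δ) :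
    c * (1 + |log x|) / x ^ (1 + α) ≤ C * (1 + 1 / δ) * x ^ (1 - b - δ) := by
  have hC : 0 ≤ C := nonneg_of_mul_nonneg_left (hc0.trans hc) (by positivity)
  rw [← rpow_two] at hc
  calc c * (1 + |log x|) / x ^ (1 + α)
      ≤ C * x ^ (2 : ℝ) * ((1 + 1 / δ) * x ^ (-δ)) / x ^ (1 + α) := by
        gcongr
        exact one_add_abs_log_le_rpow_neg hx0 hx1 hδ
    _ = C * (1 + 1 / δ) * x ^ (1 - α - δ) := by
        rw [div_eq_mul_inv, ← rpow_neg hx0.le, show 1 - α - δ = 2 + -δ + -(1 + α) by ring,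
          rpow_add hx0, rpow_add hx0]
        ring
    _ ≤ C * (1 + 1 / δ) * x ^ (1 - b - δ) :=
        mul_le_mul_of_nonneg_left (rpow_le_rpow_of_exponent_ge hx0 hx1 (by linarith))
          (by positivity)

lemma mul_one_add_abs_log_div_rpow_le_of_one_le {c C x α a δ : ℝ} (hx : 1 ≤ x)
    (hc0 : 0 ≤ c) (hc : c ≤ C) (haα : a ≤ α) (hδ : 0 < δ) :
    c * (1 + |log x|) / x ^ (1 + α) ≤ C * (1 + 1 / δ) * x ^ (δ - (1 + a)) := by
  have hx0 : 0 < x := by linarith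
  have hC : 0 ≤ C := hc0.trans hc
  calc c * (1 + |log x|) / x ^ (1 + α)
      ≤ C * ((1 + 1 / δ) * x ^ δ) / x ^ (1 + α) := by
        gcongr
        exact one_add_abs_log_le_rpow hx hδ
    _ = C * (1 + 1 / δ) * x ^ (δ - (1 + α)) := by
        rw [div_eq_mul_inv, ← rpow_neg hx0.le, sub_eq_add_neg, rpow_add hx0]
        ring
    _ ≤ C * (1 + 1 / δ) * x ^ (δ - (1 + a)) := by
        gcongr

section

variable {g : ℝ → ℝ} {C : ℝ}

lemma abs_mul_one_add_abs_log_div_rpow_le (hg : ∀ z, |g z| ≤ C * min (z ^ 2) 1)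
    {a b δ α z : ℝ} (hδ : 0 < δ) (hα : α ∈ Icc a b) (hz : z ≠ 0) :
    |g z| * (1 + |(log |z|)|) / |z| ^ (1 + α) ≤
      C * (1 + 1 / δ) * if |z| ≤ 1 then |z| ^ (1 - b - δ) else |z| ^ (δ - (1 + a)) := by
  split_ifs with hz1
  · refine mul_one_add_abs_log_div_rpow_le_of_le_one (abs_pos.2 hz) hz1 (abs_nonneg _) ?_
      hα.2 hδ
    simpa [min_eq_left ((sq_le_one_iff_abs_le_one z).2 hz1)] using hg z
  · refine mul_one_add_abs_log_div_rpow_le_of_one_le (not_le.1 hz1).le (abs_nonneg _) ?_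
      hα.1 hδ
    simpa [min_eq_right ((one_le_sq_iff_one_le_abs z).2 (not_le.1 hz1).le)] using hg z

lemma exists_integrable_bound (hg : ∀ z, |g z| ≤ C * min (z ^ 2) 1) {α₀ : ℝ}
    (hα₀ : α₀ ∈ Ioo (0 : ℝ) 2) :
    ∃ B : ℝ → ℝ, Integrable B ∧ ∀ᶠ α in 𝓝 α₀, ∀ z ≠ 0,
      ‖g z / |z| ^ (1 + α)‖ ≤ B z ∧ ‖g z * log |z| / |z| ^ (1 + α)‖ ≤ B z := by
  obtain ⟨hα₀0, hα₀2⟩ := hα₀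
  set ε := min α₀ (2 - α₀) / 3 with hε_def
  have hε : 0 < ε := by have : 0 < min α₀ (2 - α₀) := lt_min hα₀0 (by linarith); positivity
  have hεα₀ : 3 * ε ≤ α₀ := by linarith [min_le_left α₀ (2 - α₀)]
  have hεα₀' : 3 * ε ≤ 2 - α₀ := by linarith [min_le_right α₀ (2 - α₀)]
  refine ⟨fun z => C * (1 + 1 / ε) *
      if |z| ≤ 1 then |z| ^ (1 - (α₀ + ε) - ε) else |z| ^ (ε - (1 + (α₀ - ε))),
    (integrable_piecewise_abs_rpow (by linarith) (by linarith)).const_mul _, ?_⟩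
  filter_upwards [Icc_mem_nhds (show α₀ - ε < α₀ by linarith) (show α₀ < α₀ + ε by linarith)]
    with α hα z hz
  have hB := abs_mul_one_add_abs_log_div_rpow_le hg hε hα hz
  have hden : 0 ≤ |z| ^ (1 + α) := rpow_nonneg (abs_nonneg z) _
  have hlog : 0 ≤ |(log |z|)| := abs_nonneg _
  simp only [norm_div, norm_mul, Real.norm_eq_abs, abs_of_nonneg hden]
  constructor <;> refine le_trans ?_ hB <;> gcongr
  · exact le_mul_of_one_le_right (abs_nonneg _) (by linarith)
  · linarith

theorem hasDerivAt_integral_div_abs_rpow (hgm : Measurable g)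
    (hg : ∀ z, |g z| ≤ C * min (z ^ 2) 1) {α₀ : ℝ} (hα₀ : α₀ ∈ Ioo (0 : ℝ) 2) :
    HasDerivAt (fun α => ∫ z, g z / |z| ^ (1 + α))
      (-∫ z, g z * log |z| / |z| ^ (1 + α₀)) α₀ := by
  obtain ⟨B, hB, hbound⟩ := exists_integrable_bound hg hα₀
  obtain ⟨s, hs, hsB⟩ := hbound.exists_mem
  have hmeas (α : ℝ) : AEStronglyMeasurable (fun z : ℝ => g z / |z| ^ (1 + α)) :=
    (by fun_prop : Measurable fun z : ℝ => g z / |z| ^ (1 + α)).aestronglyMeasurable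
  have hmeas' : AEStronglyMeasurable (fun z : ℝ => -(g z * log |z| / |z| ^ (1 + α₀))) :=
    (by fun_prop : Measurable fun z : ℝ => -(g z * log |z| / |z| ^ (1 + α₀))).aestronglyMeasurable
  have hint : Integrable (fun z : ℝ => g z / |z| ^ (1 + α₀)) :=
    hB.mono' (hmeas α₀) <| by
      filter_upwards [Measure.ae_ne volume 0] with z hz
      exact (hsB α₀ (mem_of_mem_nhds hs) z hz).1
  rw [← integral_neg]
  refine (hasDerivAt_integral_of_dominated_loc_of_deriv_le
    (F' := fun α z => -(g z * log |z| / |z| ^ (1 + α))) hs (.of_forall hmeas) hint hmeas'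
    ?_ hB ?_).2
  · filter_upwards [Measure.ae_ne volume 0] with z hz α hα
    simpa only [norm_neg] using (hsB α hα z hz).2
  · filter_upwards [Measure.ae_ne volume 0] with z hz α _
    exact hasDerivAt_div_rpow_one_add (abs_pos.2 hz) _ _

theorem continuousOn_integral_mul_log_div_abs_rpow (hgm : Measurable g)
    (hg : ∀ z, |g z| ≤ C * min (z ^ 2) 1) :
    ContinuousOn (fun α => ∫ z, g z * log |z| / |z| ^ (1 + α)) (Ioo (0 : ℝ) 2) := by
  intro α₀ hα₀
  obtain ⟨B, hB, hbound⟩ := exists_integrable_bound hg hα₀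
  refine (continuousAt_of_dominated (bound := B) (.of_forall fun α => ?_) ?_ hB
    ?_).continuousWithinAt
  · exact (by fun_prop : Measurable fun z : ℝ => g z * log |z| / |z| ^ (1 + α)).aestronglyMeasurable
  · filter_upwards [hbound] with α hα
    filter_upwards [Measure.ae_ne volume 0] with z hz using (hα z hz).2
  · filter_upwards [Measure.ae_ne volume 0] with z hz
    exact (hasDerivAt_div_rpow_one_add (abs_pos.2 hz) _ _).continuousAt

theorem contDiffOn_integral_div_abs_rpow (hgm : Measurable g)
    (hg : ∀ z, |g z| ≤ C * min (z ^ 2) 1) :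
    ContDiffOn ℝ 1 (fun α => ∫ z, g z / |z| ^ (1 + α)) (Ioo (0 : ℝ) 2) := by
  have hderiv := fun α (hα : α ∈ Ioo (0 : ℝ) 2) => hasDerivAt_integral_div_abs_rpow hgm hg hα
  rw [contDiffOn_one_iff_derivWithin isOpen_Ioo.uniqueDiffOn]
  refine ⟨fun α hα => (hderiv α hα).differentiableAt.differentiableWithinAt, ?_⟩
  refine (continuousOn_integral_mul_log_div_abs_rpow hgm hg).neg.congr fun α hα => ?_
  rw [derivWithin_of_isOpen isOpen_Ioo hα, (hderiv α hα).deriv]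
  rfl

end

lemma abs_compensated_increment_le {f : ℝ → ℝ} {M₀ M₂ : ℝ} (hf : Differentiable ℝ f)
    (hf' : Differentiable ℝ (deriv f)) (hM₀ : ∀ x, |f x| ≤ M₀)
    (hM₂ : ∀ x, |deriv (deriv f) x| ≤ M₂) (z : ℝ) :
    |f z - f 0 - deriv f 0 * (if |z| ≤ 1 then z else 0)| ≤ (M₂ + 2 * M₀) * min (z ^ 2) 1 := by
  have hM₀0 : 0 ≤ M₀ := (abs_nonneg _).trans (hM₀ 0)
  have hM₂0 : 0 ≤ M₂ := (abs_nonneg _).trans (hM₂ 0)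
  split_ifs with hz
  · rw [min_eq_left ((sq_le_one_iff_abs_le_one z).2 hz)]
    have := abs_sub_sub_deriv_mul_le hf hf' hM₂ 0 z
    rw [sub_zero] at this
    nlinarith [sq_nonneg z]
  · rw [min_eq_right ((one_le_sq_iff_one_le_abs z).2 (not_le.1 hz).le), mul_zero, sub_zero,
      mul_one]
    linarith [abs_sub (f z) (f 0), hM₀ z, hM₀ 0]

theorem stmt8 (f : ℝ → ℝ) (hf : ContDiff ℝ 2 f)
    (hfb : BddAbove (Set.range fun x => |f x|))
    (hfb2 : BddAbove (Set.range fun x => |iteratedDeriv 2 f x|)) :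
    ContDiffOn ℝ 1
      (fun α : ℝ =>
        ∫ z : ℝ, (f z - f 0 - deriv f 0 * (if |z| ≤ 1 then z else 0)) / |z| ^ (1 + α))
      (Set.Ioo 0 2) ∧
    ∀ α ∈ Set.Ioo (0 : ℝ) 2,
      HasDerivAt
        (fun α : ℝ =>
          ∫ z : ℝ, (f z - f 0 - deriv f 0 * (if |z| ≤ 1 then z else 0)) / |z| ^ (1 + α))
        (-∫ z : ℝ,
            (f z - f 0 - deriv f 0 * (if |z| ≤ 1 then z else 0)) * Real.log |z| / |z| ^ (1 + α))
        α := by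
  obtain ⟨M₀, hM₀⟩ := hfb
  obtain ⟨M₂, hM₂⟩ := hfb2
  rw [iteratedDeriv_eq_iterate] at hM₂
  have hbound := abs_compensated_increment_le (hf.differentiable (by norm_num))
    ((hf.deriv' (n := 1)).differentiable one_ne_zero) (fun x => hM₀ ⟨x, rfl⟩)
    (fun x => hM₂ ⟨x, rfl⟩)
  have hmeas : Measurable fun z => f z - f 0 - deriv f 0 * (if |z| ≤ 1 then z else 0) :=
    (hf.continuous.measurable.sub_const _).sub <| (Measurable.ite
      (measurableSet_le measurable_abs measurable_const) measurable_id measurable_const).const_mul _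
  exact ⟨contDiffOn_integral_div_abs_rpow hmeas hbound,
    fun α hα => hasDerivAt_integral_div_abs_rpow hmeas hbound hα⟩
end
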